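/- If a connected finite graph G has at least three branch points, then there is an arc α in G whose endpoints are branch points of G and whose interior contains exactly one branch point of G; thus α contains exactly three branch points of G. -/

import Mathlib

open Set Topology

/-- The points `0` and `1` of the unit interval `[0,1]`. -/
def i0 : Set.Icc (0:ℝ) 1 := ⟨0, by norm_num⟩
def i1 : Set.Icc (0:ℝ) 1 := ⟨1, by norm_num⟩

/-- A subset `A` of a topological space `X` is an *arc* if, with the subspace
topology, it is homeomorphic to the closed unit interval `[0,1]`. -/
def IsArc {X : Type*} [TopologicalSpace X] (A : Set X) : Prop :=
  Nonempty (A ≃ₜ Set.Icc (0:ℝ) 1)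

/-- `X` is `n`-arc connected if any `n` points of `X` lie on a common arc. -/
def NArcConnected (X : Type*) [TopologicalSpace X] (n : ℕ) : Prop :=
  ∀ p : Fin n → X, ∃ A : Set X, IsArc A ∧ ∀ i, p i ∈ A

open Classical
/-- A (connected, compact Hausdorff) topological finite graph structure on `X`:
finitely many arcs (edges), given as embeddings of `[0,1]`, covering `X`,
such that two distinct edges meet only in common endpoints. -/
structure TopGraph (X : Type*) [TopologicalSpace X] where
  n : ℕ
  edge : Fin n → Set.Icc (0:ℝ) 1 → X
  emb : ∀ i, Topology.IsEmbedding (edge i)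
  cover : (⋃ i, Set.range (edge i)) = Set.univ
  meet : ∀ i j, i ≠ j → ∀ x ∈ Set.range (edge i) ∩ Set.range (edge j),
    (x = edge i i0 ∨ x = edge i i1) ∧ (x = edge j i0 ∨ x = edge j i1)

/-- The degree (order) of a point of a finite graph: the number of edge-germs at it,
counted via incidences of edge endpoints.  (Points interior to an edge have order two;
they are never branch points.) -/
noncomputable def TopGraph.degree {X : Type*} [TopologicalSpace X] (G : TopGraph X) (x : X) : ℕ :=
  ∑ i : Fin G.n, ((if G.edge i i0 = x then 1 else 0) + (if G.edge i i1 = x then 1 else 0))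

/-- A branch point of a finite graph is a point of order at least `3`. -/
def TopGraph.IsBranchPoint {X : Type*} [TopologicalSpace X] (G : TopGraph X) (x : X) : Prop :=
  3 ≤ G.degree x

/-!
Branch points are vertices of the graph, so everything can be read off the incidence graph on
the points of `X` (two points are adjacent when they are the two ends of one edge). There a
vertex with three distinct neighbours is a branch point, and connectedness of `X` makes any two
vertices reachable from each other, since the union of the edges reachable from a given vertex
is clopen.

Given branch points `a`, `b`, `c`, take a path `P` from `a` to `b`. If `c` is not on it, follow
a path from `c` up to its first vertex `w` on `P`: if `w` is an end of `P` we get a path through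
it between two branch points, and otherwise `w` has two neighbours on `P` and a third one off it,
so it is an interior branch point of `P`. Cutting such a path at an interior branch point as long
as one half still has an interior branch point ends with a path containing exactly three branch
points. Gluing its edges one after the other gives an injective path in `X`; since distinct edges
meet only at common ends, the branch points on it are exactly those of the combinatorial path.
-/

open Function
open scoped Finset

theorem PreconnectedSpace.forall_of_finite_closed_cover {X ι : Type*} [TopologicalSpace X]
    [PreconnectedSpace X] [Finite ι] {F : ι → Set X} (hF : ∀ i, IsClosed (F i))
    (hcover : ⋃ i, F i = univ) {R : ι → Prop}
    (hR : ∀ i j, R i → (F i ∩ F j).Nonempty → R j) {i₀ j : ι} (hi₀ : R i₀)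
    (hne₀ : (F i₀).Nonempty) (hne : (F j).Nonempty) : R j := by
  set U := ⋃ i ∈ {i | R i}, F i
  have hUc : Uᶜ = ⋃ i ∈ {i | ¬ R i}, F i := by
    ext p
    obtain ⟨k, hk⟩ := mem_iUnion.1 (hcover ▸ mem_univ p)
    simp only [U, mem_compl_iff, mem_iUnion, exists_prop, not_exists, not_and]
    exact ⟨fun h => ⟨k, fun hRk => h k hRk hk, hk⟩,
      fun ⟨l, hl, hpl⟩ i hi hpi => hl (hR i l hi ⟨p, hpi, hpl⟩)⟩
  have hU : IsClopen U :=
    ⟨(toFinite _).isClosed_biUnion fun i _ => hF i, by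
      rw [← isClosed_compl_iff, hUc]; exact (toFinite _).isClosed_biUnion fun i _ => hF i⟩
  obtain ⟨p, hp⟩ := hne
  have hpU : p ∈ U :=
    (hU.eq_univ (hne₀.mono (subset_biUnion_of_mem (u := F) hi₀))).symm ▸ mem_univ p
  obtain ⟨i, hi, hpi⟩ := mem_iUnion₂.1 hpU
  exact hR i j hi ⟨p, hpi, hp⟩

theorem Path.injective_trans {X : Type*} [TopologicalSpace X] {x y z : X} {γ : Path x y}
    {γ' : Path y z} (hγ : Injective γ) (hγ' : Injective γ') (hmeet : range γ ∩ range γ' ⊆ {y}) :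
    Injective (γ.trans γ') := by
  have hjunction : ∀ s t, γ s = γ' t → (s : ℝ) = 1 ∧ (t : ℝ) = 0 := by
    intro s t h
    have hy : γ s = y := hmeet ⟨⟨s, rfl⟩, ⟨t, h.symm⟩⟩
    exact ⟨congrArg Subtype.val (hγ (hy.trans γ.target.symm)),
      congrArg Subtype.val (hγ' ((h.symm.trans hy).trans γ'.source.symm))⟩
  intro s t hst
  rw [Path.trans_apply, Path.trans_apply] at hst
  split_ifs at hst with hs ht ht
  · exact Subtype.ext (by linarith [congrArg Subtype.val (hγ hst)])
  · linarith [(hjunction _ _ hst).2]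
  · linarith [(hjunction _ _ hst.symm).2]
  · exact Subtype.ext (by linarith [congrArg Subtype.val (hγ' hst)])

theorem Path.existsUnique_mem_image_interior {X : Type*} [TopologicalSpace X] {x y z : X}
    {γ : Path x y} (hγ : Injective γ) {S : Set X} (hzx : z ≠ x) (hzy : z ≠ y)
    (hS : range γ ∩ S = {x, y, z}) : ∃! w, w ∈ γ '' {s | s ≠ i0 ∧ s ≠ i1} ∧ w ∈ S := by
  obtain ⟨⟨t, rfl⟩, hzS⟩ : z ∈ range γ ∩ S := hS ▸ by simp
  refine ⟨γ t, ⟨⟨t, ⟨?_, ?_⟩, rfl⟩, hzS⟩, ?_⟩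
  · rintro rfl
    exact hzx γ.source
  · rintro rfl
    exact hzy γ.target
  rintro _ ⟨⟨s, ⟨hs0, hs1⟩, rfl⟩, hsS⟩
  rcases hS.subset ⟨mem_range_self s, hsS⟩ with h | h | h
  · exact absurd (hγ (h.trans γ.source.symm)) hs0
  · exact absurd (hγ (h.trans γ.target.symm)) hs1
  · exact h

namespace SimpleGraph

variable {V : Type*} {G : SimpleGraph V}

theorem Walk.IsPath.append {u v w : V} {p : G.Walk u v} {q : G.Walk v w} (hp : p.IsPath)
    (hq : q.IsPath) (hpq : ∀ x ∈ p.support, x ∈ q.support → x = v) : (p.append q).IsPath := by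
  rw [Walk.isPath_def, Walk.support_append]
  have hq' := hq.support_nodup
  rw [← Walk.cons_tail_support, List.nodup_cons] at hq'
  refine hp.support_nodup.append hq'.2 fun x hxp hxq => ?_
  obtain rfl := hpq x hxp (List.mem_of_mem_tail hxq)
  exact hq'.1 hxq

theorem Walk.exists_isPath_meets_only_at_end (S : Set V) {c a : V} (Q : G.Walk c a)
    (ha : a ∈ S) : ∃ w ∈ S, ∃ Q' : G.Walk c w, Q'.IsPath ∧ ∀ v ∈ Q'.support, v ∈ S → v = w := by
  induction Q with
  | nil => exact ⟨_, ha, .nil, .nil, by simp⟩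
  | @cons c d a h Q ih =>
    by_cases hc : c ∈ S
    · exact ⟨c, hc, .nil, .nil, by simp⟩
    obtain ⟨w, hw, Q', -, hQ'⟩ := ih ha
    refine ⟨w, hw, (Q'.cons h).bypass, (Q'.cons h).bypass_isPath, fun v hv hvS => ?_⟩
    have hv' := (Q'.cons h).support_bypass_subset_support hv
    rw [Walk.support_cons, List.mem_cons] at hv'
    rcases hv' with rfl | hv'
    · exact absurd hvS hc
    · exact hQ' v hv' hvS

theorem Walk.IsPath.exists_adj_adj {a b w : V} {P : G.Walk a b} (hP : P.IsPath)
    (hw : w ∈ P.support) (hwa : w ≠ a) (hwb : w ≠ b) :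
    ∃ u₁ u₂, u₁ ≠ u₂ ∧ G.Adj w u₁ ∧ G.Adj w u₂ ∧ u₁ ∈ P.support ∧ u₂ ∈ P.support := by
  obtain ⟨p, q, -, -, rfl⟩ := hP.mem_support_iff_exists_append.1 hw
  have hp : ¬ p.Nil := fun h => hwa h.eq.symm
  have hq : ¬ q.Nil := fun h => hwb h.eq
  refine ⟨p.penultimate, q.snd, hP.ne_of_mem_support_of_append (q.adj_snd hq).ne.symm
    (p.getVert_mem_support _) (q.getVert_mem_support _), (p.adj_penultimate hp).symm,
    q.adj_snd hq, ?_, ?_⟩ <;> rw [Walk.mem_support_append_iff]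
  · exact Or.inl (p.getVert_mem_support _)
  · exact Or.inr (q.getVert_mem_support _)

variable (B : Set V)

theorem exists_isPath_interior_mem
    (hB : ∀ w u₁ u₂ u₃, u₁ ≠ u₂ → u₁ ≠ u₃ → u₂ ≠ u₃ →
      G.Adj w u₁ → G.Adj w u₂ → G.Adj w u₃ → w ∈ B)
    {a b c : V} (ha : a ∈ B) (hb : b ∈ B) (hc : c ∈ B) (hab : a ≠ b) (hac : a ≠ c)
    (hbc : b ≠ c) (hrab : G.Reachable a b) (hrca : G.Reachable c a) :
    ∃ (x y : V) (R : G.Walk x y), R.IsPath ∧ x ∈ B ∧ y ∈ B ∧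
      ∃ z ∈ B, z ∈ R.support ∧ z ≠ x ∧ z ≠ y := by
  obtain ⟨P, hP⟩ := hrab.exists_isPath
  by_cases hcP : c ∈ P.support
  · exact ⟨a, b, P, hP, ha, hb, c, hc, hcP, hac.symm, hbc.symm⟩
  obtain ⟨w, hwP, Q, hQ, hQP⟩ :=
    hrca.some.exists_isPath_meets_only_at_end {v | v ∈ P.support} P.start_mem_support
  have hPQ : ∀ v ∈ P.support, v ∈ Q.support → v = w := fun v hvP hvQ => hQP v hvQ hvP
  by_cases hwa : w = a
  · subst hwa
    exact ⟨b, c, P.reverse.append Q.reverse, hP.reverse.append hQ.reverse (by simpa using hPQ),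
      hb, hc, w, ha, by simp, hab, hac⟩
  by_cases hwb : w = b
  · subst hwb
    exact ⟨a, c, P.append Q.reverse, hP.append hQ.reverse (by simpa using hPQ),
      ha, hc, w, hb, by simp, hab.symm, hbc⟩
  -- `w` has two neighbours on `P` and a third one, the last vertex of `Q` before `w`
  have hQ_ne : ¬ Q.Nil := fun h => hcP (h.eq ▸ hwP)
  obtain ⟨u₁, u₂, hu, hwu₁, hwu₂, hu₁, hu₂⟩ := hP.exists_adj_adj hwP hwa hwb
  have hq : Q.penultimate ∉ P.support := fun h =>
    (Q.adj_penultimate hQ_ne).ne (hPQ _ h (Q.getVert_mem_support _))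
  have hwB := hB w u₁ u₂ Q.penultimate hu (ne_of_mem_of_not_mem hu₁ hq)
    (ne_of_mem_of_not_mem hu₂ hq) hwu₁ hwu₂ (Q.adj_penultimate hQ_ne).symm
  exact ⟨a, b, P, hP, ha, hb, w, hwB, hwP, hwa, hwb⟩

theorem Walk.IsPath.exists_support_inter_eq_three {x y z : V} {R : G.Walk x y} (hR : R.IsPath)
    (hx : x ∈ B) (hy : y ∈ B) (hz : z ∈ B) (hzR : z ∈ R.support) (hzx : z ≠ x) (hzy : z ≠ y) :
    ∃ (x' y' z' : V) (R' : G.Walk x' y'), R'.IsPath ∧ x' ≠ y' ∧ z' ≠ x' ∧ z' ≠ y' ∧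
      {v | v ∈ R'.support} ∩ B = {x', y', z'} := by
  induction hn : R.length using Nat.strong_induction_on generalizing x y z R with
  | _ n ih =>
  set R₁ := R.takeUntil z hzR
  set R₂ := R.dropUntil z hzR
  by_cases h₁ : ∃ z₁ ∈ B, z₁ ∈ R₁.support ∧ z₁ ≠ x ∧ z₁ ≠ z
  · obtain ⟨z₁, hz₁, hz₁R, hz₁x, hz₁z⟩ := h₁
    exact ih _ (hn ▸ R.length_takeUntil_lt_length hzR hzy) (hR.takeUntil hzR) hx hz hz₁ hz₁R
      hz₁x hz₁z rfl
  by_cases h₂ : ∃ z₂ ∈ B, z₂ ∈ R₂.support ∧ z₂ ≠ z ∧ z₂ ≠ y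
  · obtain ⟨z₂, hz₂, hz₂R, hz₂z, hz₂y⟩ := h₂
    exact ih _ (hn ▸ R.length_dropUntil_lt_length hzR hzx) (hR.dropUntil hzR) hz hy hz₂ hz₂R
      hz₂z hz₂y rfl
  push Not at h₁ h₂
  refine ⟨x, y, z, R, hR, fun hxy => ?_, hzx, hzy, ?_⟩
  · subst hxy
    rw [Walk.nil_iff_support_eq.1 (Walk.isPath_iff_nil.1 hR)] at hzR
    exact hzx (List.mem_singleton.1 hzR)
  ext v
  refine ⟨fun ⟨hv, hvB⟩ => ?_, ?_⟩
  · replace hv : v ∈ (R₁.append R₂).support := by rwa [R.take_spec hzR]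
    rw [Walk.mem_support_append_iff] at hv
    rcases hv with hv | hv
    · rcases eq_or_ne v x with rfl | hvx
      · exact Or.inl rfl
      · exact Or.inr (Or.inr (h₁ v hvB hv hvx))
    · rcases eq_or_ne v z with rfl | hvz
      · exact Or.inr (Or.inr rfl)
      · exact Or.inr (Or.inl (h₂ v hvB hv hvz))
  · rintro (rfl | rfl | rfl)
    exacts [⟨R.start_mem_support, hx⟩, ⟨R.end_mem_support, hy⟩, ⟨hzR, hz⟩]

theorem exists_isPath_support_inter_eq_three
    (hB : ∀ w u₁ u₂ u₃, u₁ ≠ u₂ → u₁ ≠ u₃ → u₂ ≠ u₃ →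
      G.Adj w u₁ → G.Adj w u₂ → G.Adj w u₃ → w ∈ B)
    {a b c : V} (ha : a ∈ B) (hb : b ∈ B) (hc : c ∈ B) (hab : a ≠ b) (hac : a ≠ c)
    (hbc : b ≠ c) (hrab : G.Reachable a b) (hrca : G.Reachable c a) :
    ∃ (x y z : V) (R : G.Walk x y), R.IsPath ∧ x ≠ y ∧ z ≠ x ∧ z ≠ y ∧
      {v | v ∈ R.support} ∩ B = {x, y, z} := by
  obtain ⟨x, y, R, hR, hx, hy, z, hz, hzR, hzx, hzy⟩ :=
    exists_isPath_interior_mem B hB ha hb hc hab hac hbc hrab hrca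
  exact hR.exists_support_inter_eq_three B hx hy hz hzR hzx hzy

end SimpleGraph

namespace TopGraph

variable {X : Type*} [TopologicalSpace X] (G : TopGraph X)

def ends (i : Fin G.n) : Set X := {G.edge i i0, G.edge i i1}

def IsVertex (x : X) : Prop := ∃ i, x ∈ G.ends i

def incidenceGraph : SimpleGraph X where
  Adj u v := u ≠ v ∧ ∃ i, u ∈ G.ends i ∧ v ∈ G.ends i
  symm := ⟨fun _ _ ⟨h, i, hu, hv⟩ => ⟨h.symm, i, hv, hu⟩⟩
  loopless := ⟨fun _ h => h.1 rfl⟩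

def CoveredByEdgesIn (S A : Set X) : Prop :=
  ∀ p ∈ A, ∃ i, p ∈ range (G.edge i) ∧ G.ends i ⊆ S

def edgePath (i : Fin G.n) : Path (G.edge i i0) (G.edge i i1) where
  toFun := G.edge i
  continuous_toFun := (G.emb i).continuous
  source' := rfl
  target' := rfl

variable {G}

theorem left_mem_ends (i : Fin G.n) : G.edge i i0 ∈ G.ends i := mem_insert _ _

theorem ends_subset_range (i : Fin G.n) : G.ends i ⊆ range (G.edge i) := by
  rintro _ (rfl | rfl) <;> exact mem_range_self _

theorem eq_of_mem_ends {i : Fin G.n} {x u v : X} (hx : x ∈ G.ends i) (hu : u ∈ G.ends i)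
    (hv : v ∈ G.ends i) (hxu : x ≠ u) (hxv : x ≠ v) : u = v := by
  simp only [ends, mem_insert_iff, mem_singleton_iff] at hx hu hv
  grind

theorem mem_ends_of_mem_range_of_ne {i j : Fin G.n} (hij : i ≠ j) {x : X}
    (hi : x ∈ range (G.edge i)) (hj : x ∈ range (G.edge j)) : x ∈ G.ends i ∧ x ∈ G.ends j :=
  G.meet i j hij x ⟨hi, hj⟩

theorem IsVertex.mem_ends {x : X} (hx : G.IsVertex x) {i : Fin G.n}
    (hi : x ∈ range (G.edge i)) : x ∈ G.ends i := by
  obtain ⟨j, hj⟩ := hx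
  obtain rfl | hij := eq_or_ne i j
  · exact hj
  · exact (mem_ends_of_mem_range_of_ne hij hi (ends_subset_range j hj)).1

theorem card_filter_mem_ends_le_degree (x : X) : #{i | x ∈ G.ends i} ≤ G.degree x := by
  rw [Finset.card_filter]
  refine Finset.sum_le_sum fun i _ => ?_
  simp only [ends, mem_insert_iff, mem_singleton_iff]
  split_ifs <;> simp_all [eq_comm]

theorem IsBranchPoint.isVertex {x : X} (hx : G.IsBranchPoint x) : G.IsVertex x := by
  by_contra h
  have hdeg : G.degree x = 0 := Finset.sum_eq_zero fun i _ => by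
    simp_all [IsVertex, ends, eq_comm]
  unfold IsBranchPoint at hx
  omega

theorem isBranchPoint_of_adj {x u₁ u₂ u₃ : X} (h₁₂ : u₁ ≠ u₂) (h₁₃ : u₁ ≠ u₃) (h₂₃ : u₂ ≠ u₃)
    (a₁ : G.incidenceGraph.Adj x u₁) (a₂ : G.incidenceGraph.Adj x u₂)
    (a₃ : G.incidenceGraph.Adj x u₃) : G.IsBranchPoint x := by
  obtain ⟨hx₁, i₁, hxi₁, hi₁⟩ := a₁
  obtain ⟨hx₂, i₂, hxi₂, hi₂⟩ := a₂
  obtain ⟨hx₃, i₃, hxi₃, hi₃⟩ := a₃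
  -- an edge has only two ends, so distinct neighbours of `x` come from distinct edges
  have hne : ∀ {i j u v}, x ≠ u → x ≠ v → u ≠ v → x ∈ G.ends i → u ∈ G.ends i →
      v ∈ G.ends j → i ≠ j := by
    rintro i j u v hxu hxv huv hx hu hv rfl
    exact huv (eq_of_mem_ends hx hu hv hxu hxv)
  calc 3 = #{i₁, i₂, i₃} := (Finset.card_eq_three.2 ⟨i₁, i₂, i₃, hne hx₁ hx₂ h₁₂ hxi₁ hi₁ hi₂,
          hne hx₁ hx₃ h₁₃ hxi₁ hi₁ hi₃, hne hx₂ hx₃ h₂₃ hxi₂ hi₂ hi₃, rfl⟩).symm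
    _ ≤ #{i | x ∈ G.ends i} := Finset.card_le_card fun i hi => by
          simp only [Finset.mem_insert, Finset.mem_singleton] at hi
          rcases hi with rfl | rfl | rfl <;> simpa
    _ ≤ G.degree x := card_filter_mem_ends_le_degree x

theorem reachable_of_mem_ends {i : Fin G.n} {u v : X} (hu : u ∈ G.ends i) (hv : v ∈ G.ends i) :
    G.incidenceGraph.Reachable u v := by
  obtain rfl | h := eq_or_ne u v
  · rfl
  · exact SimpleGraph.Adj.reachable ⟨h, i, hu, hv⟩

theorem reachable_of_isVertex [T2Space X] [ConnectedSpace X] {u v : X} (hu : G.IsVertex u)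
    (hv : G.IsVertex v) : G.incidenceGraph.Reachable u v := by
  obtain ⟨i, hui⟩ := hu
  obtain ⟨j, hvj⟩ := hv
  have hR : ∀ k l, G.incidenceGraph.Reachable u (G.edge k i0) →
      (range (G.edge k) ∩ range (G.edge l)).Nonempty →
      G.incidenceGraph.Reachable u (G.edge l i0) := by
    rintro k l hk ⟨p, hpk, hpl⟩
    obtain rfl | hkl := eq_or_ne k l
    · exact hk
    obtain ⟨hpk', hpl'⟩ := mem_ends_of_mem_range_of_ne hkl hpk hpl
    exact hk.trans ((reachable_of_mem_ends (left_mem_ends k) hpk').trans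
      (reachable_of_mem_ends hpl' (left_mem_ends l)))
  have huj := PreconnectedSpace.forall_of_finite_closed_cover
    (j := j) (fun k => (isCompact_range (G.emb k).continuous).isClosed) G.cover hR
    (reachable_of_mem_ends hui (left_mem_ends i)) ⟨_, mem_range_self i0⟩ ⟨_, mem_range_self i0⟩
  exact huj.trans (reachable_of_mem_ends (left_mem_ends j) hvj)

theorem exists_injective_path_of_mem_ends {i : Fin G.n} {u v : X} (hu : u ∈ G.ends i)
    (hv : v ∈ G.ends i) (huv : u ≠ v) :
    ∃ γ : Path u v, Injective γ ∧ range γ = range (G.edge i) := by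
  rcases hu with rfl | rfl <;> rcases hv with rfl | rfl
  · exact absurd rfl huv
  · exact ⟨G.edgePath i, (G.emb i).injective, rfl⟩
  · exact ⟨(G.edgePath i).symm, (G.emb i).injective.comp unitInterval.symm_bijective.injective,
      Path.symm_range _⟩
  · exact absurd rfl huv

theorem CoveredByEdgesIn.mem_of_isVertex {S A : Set X} (hA : G.CoveredByEdgesIn S A) {p : X}
    (hp : p ∈ A) (hv : G.IsVertex p) : p ∈ S :=
  let ⟨_, hi, hS⟩ := hA p hp
  hS (hv.mem_ends hi)

theorem exists_injective_path_of_isPath {x y : X} (P : G.incidenceGraph.Walk x y)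
    (hP : P.IsPath) (hxy : x ≠ y) :
    ∃ γ : Path x y, Injective γ ∧ {v | v ∈ P.support} ⊆ range γ ∧
      G.CoveredByEdgesIn {v | v ∈ P.support} (range γ) := by
  induction P with
  | nil => exact absurd rfl hxy
  | @cons x d y h Q ih =>
    obtain ⟨hQ, hxQ⟩ := SimpleGraph.Walk.cons_isPath_iff h Q |>.1 hP
    have hsupp : {v | v ∈ (Q.cons h).support} = insert x {v | v ∈ Q.support} := by ext; simp
    rw [hsupp]
    obtain ⟨hxd, j, hxj, hdj⟩ := h
    obtain ⟨β, hβ, hβj⟩ := exists_injective_path_of_mem_ends hxj hdj hxd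
    have hends : G.ends j ⊆ insert x {v | v ∈ Q.support} := fun p hp => by
      obtain rfl | hxp := eq_or_ne x p
      · exact mem_insert _ _
      · exact eq_of_mem_ends hxj hdj hp hxd hxp ▸ mem_insert_of_mem _ Q.start_mem_support
    obtain rfl | hdy := eq_or_ne d y
    · obtain rfl := SimpleGraph.Walk.eq_nil_iff_nil.2 (SimpleGraph.Walk.isPath_iff_nil.1 hQ)
      refine ⟨β, hβ, ?_, fun p hp => ⟨j, hβj ▸ hp, hends⟩⟩
      exact insert_subset β.source_mem_range (by simp)
    obtain ⟨γ, hγ, hQγ, hγQ⟩ := ih hQ hdy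
    have hmeet : range β ∩ range γ ⊆ {d} := by
      rintro p ⟨hpβ, hpγ⟩
      obtain ⟨i, hpi, hiQ⟩ := hγQ p hpγ
      have hji : j ≠ i := by
        rintro rfl
        exact hxQ (hiQ hxj)
      obtain ⟨hpj, hpi'⟩ := mem_ends_of_mem_range_of_ne hji (hβj ▸ hpβ) hpi
      have hxp : x ≠ p := fun hxp => hxQ (hxp ▸ hiQ hpi')
      exact (eq_of_mem_ends hxj hdj hpj hxd hxp).symm
    refine ⟨β.trans γ, Path.injective_trans hβ hγ hmeet, ?_, ?_⟩ <;> rw [Path.trans_range]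
    · exact insert_subset (Or.inl β.source_mem_range) (hQγ.trans subset_union_right)
    · rintro p (hp | hp)
      · exact ⟨j, hβj ▸ hp, hends⟩
      · obtain ⟨i, hpi, hiQ⟩ := hγQ p hp
        exact ⟨i, hpi, hiQ.trans (subset_insert _ _)⟩

end TopGraph

/-- A connected finite graph with at least three branch points contains an arc whose
endpoints are branch points and whose interior contains exactly one branch point;
thus the arc contains exactly three branch points. -/
theorem arc_with_three_branch_points {X : Type*} [TopologicalSpace X] [T2Space X]
    [ConnectedSpace X] (G : TopGraph X)
    (h3 : ∃ x y z : X, x ≠ y ∧ x ≠ z ∧ y ≠ z ∧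
      G.IsBranchPoint x ∧ G.IsBranchPoint y ∧ G.IsBranchPoint z) :
    ∃ α : Set.Icc (0:ℝ) 1 → X, Topology.IsEmbedding α ∧
      G.IsBranchPoint (α i0) ∧ G.IsBranchPoint (α i1) ∧
      (∃! z, z ∈ α '' {s | s ≠ i0 ∧ s ≠ i1} ∧ G.IsBranchPoint z) ∧
      (Set.range α ∩ {x | G.IsBranchPoint x}).ncard = 3 := by
  obtain ⟨a, b, c, hab, hac, hbc, ha, hb, hc⟩ := h3
  obtain ⟨x, y, z, R, hR, hxy, hzx, hzy, hRB⟩ :=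
    SimpleGraph.exists_isPath_support_inter_eq_three {p | G.IsBranchPoint p}
      (fun _ _ _ _ => TopGraph.isBranchPoint_of_adj) ha hb hc hab hac hbc
      (TopGraph.reachable_of_isVertex ha.isVertex hb.isVertex)
      (TopGraph.reachable_of_isVertex hc.isVertex ha.isVertex)
  obtain ⟨γ, hγ, hRγ, hγR⟩ := TopGraph.exists_injective_path_of_isPath R hR hxy
  have hγB : range γ ∩ {p | G.IsBranchPoint p} = {x, y, z} := by
    refine hRB ▸ Subset.antisymm (fun p ⟨hp, hpB⟩ => ?_) (inter_subset_inter_left _ hRγ)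
    exact ⟨hγR.mem_of_isVertex hp hpB.isVertex, hpB⟩
  refine ⟨γ, (γ.continuous.isClosedEmbedding hγ).isEmbedding, ?_, ?_,
    Path.existsUnique_mem_image_interior hγ hzx hzy hγB, ?_⟩
  · rw [show γ i0 = x from γ.source]
    exact (hγB.symm.subset (mem_insert x _)).2
  · rw [show γ i1 = y from γ.target]
    exact (hγB.symm.subset (mem_insert_of_mem x (mem_insert y _))).2
  · rw [hγB]
    exact ncard_eq_three.2 ⟨x, y, z, hxy, hzx.symm, hzy.symm, rfl⟩
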